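/- Fix $\sigma \in (0,1)$, $q > 0$ with $\sigma q < 1$, and $\gamma > 0$. Then there exists a constant $a > e^{e^e}$ (depending on $\sigma, q, \gamma$) such that, with $a_n = \big(\ln\ln\ln(n + a)\big)^{-\sigma}$ for $n \ge 0$, for all $n \ge 0$: $a_{n+1} \ge a_n\big(1 - \exp\{-\exp\{\exp\{\gamma\, a_n^{-q}\}\}\}\big)$. -/
import Mathlib


open Real

lemma log_diff_le' {a b : ℝ} (ha : 0 < a) (hab : a ≤ b) :
    Real.log b - Real.log a ≤ (b - a) / a := by
  have hb : 0 < b := lt_of_lt_of_le ha hab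
  rw [← Real.log_div hb.ne' ha.ne']
  calc Real.log (b / a) ≤ b / a - 1 := Real.log_le_sub_one_of_pos (div_pos hb ha)
    _ = (b - a) / a := by field_simp

theorem stmt9 (σ q γ : ℝ) (hσ : σ ∈ Set.Ioo 0 1) (hq : 0 < q)
    (hσq : σ * q < 1) (hγ : 0 < γ) :
    ∃ a : ℝ, Real.exp (Real.exp (Real.exp 1)) < a ∧
      ∀ n : ℕ,
        (Real.log (Real.log (Real.log ((n : ℝ) + 1 + a)))) ^ (-σ) ≥
          (Real.log (Real.log (Real.log ((n : ℝ) + a)))) ^ (-σ) *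
            (1 - Real.exp (-Real.exp (Real.exp (γ *
              ((Real.log (Real.log (Real.log ((n : ℝ) + a)))) ^ (-σ)) ^ (-q))))) := by
  obtain ⟨hσ0, hσ1⟩ := hσ
  set c : ℝ := 1 - σ * q with hcdef
  have hc0 : 0 < c := by simp only [hcdef]; linarith
  set M : ℝ := max 2 (γ ^ (1 / c)) with hMdef
  have hM2 : (2:ℝ) ≤ M := le_max_left _ _
  have hM1 : (1:ℝ) < M := by linarith
  refine ⟨exp (exp (exp M)), by
    exact exp_lt_exp.2 (exp_lt_exp.2 (exp_lt_exp.2 hM1)), ?_⟩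
  intro n
  set a : ℝ := exp (exp (exp M)) with hadef
  set x : ℝ := (n : ℝ) + a with hxdef
  have hxx : (n : ℝ) + 1 + a = x + 1 := by rw [hxdef]; ring
  rw [hxx]
  have ha0 : 0 < a := exp_pos _
  have hax : a ≤ x := by
    rw [hxdef]; exact le_add_of_nonneg_left (Nat.cast_nonneg n)
  have hx0 : 0 < x := lt_of_lt_of_le ha0 hax
  have hx1 : x ≤ x + 1 := by linarith
  have hx10 : 0 < x + 1 := by linarith
  set l1 := Real.log x with hl1
  set l1' := Real.log (x + 1) with hl1'
  have hl1M : exp (exp M) ≤ l1 := by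
    calc exp (exp M) = Real.log a := (Real.log_exp _).symm
      _ ≤ l1 := Real.log_le_log ha0 hax
  have heM : (3:ℝ) ≤ exp M := by
    have := Real.add_one_le_exp M; linarith
  have heeM : (4:ℝ) ≤ exp (exp M) := by
    have := Real.add_one_le_exp (exp M); linarith
  have hl1pos : (0:ℝ) < l1 := by linarith
  have hl1le : l1 ≤ l1' := Real.log_le_log hx0 hx1
  have hl1'pos : (0:ℝ) < l1' := lt_of_lt_of_le hl1pos hl1le
  set l2 := Real.log l1 with hl2
  set l2' := Real.log l1' with hl2'
  have hl2M : exp M ≤ l2 := by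
    calc exp M = Real.log (exp (exp M)) := (Real.log_exp _).symm
      _ ≤ l2 := Real.log_le_log (exp_pos _) hl1M
  have hl2pos : (0:ℝ) < l2 := by linarith
  have hl2le : l2 ≤ l2' := Real.log_le_log hl1pos hl1le
  have hl2'pos : (0:ℝ) < l2' := lt_of_lt_of_le hl2pos hl2le
  set L := Real.log l2 with hL
  set L' := Real.log l2' with hL'
  have hLM : M ≤ L := by
    calc M = Real.log (exp M) := (Real.log_exp _).symm
      _ ≤ L := Real.log_le_log (exp_pos _) hl2M
  have hLpos : (0:ℝ) < L := by linarith
  have hLle : L ≤ L' := Real.log_le_log hl2pos hl2le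
  have hL'pos : (0:ℝ) < L' := lt_of_lt_of_le hLpos hLle
  -- increment bounds
  have h1 : l1' - l1 ≤ 1 / x := by
    have := log_diff_le' hx0 hx1
    simpa using this
  have h2 : l2' - l2 ≤ (1 / x) / l1 := by
    calc l2' - l2 ≤ (l1' - l1) / l1 := log_diff_le' hl1pos hl1le
      _ ≤ (1 / x) / l1 := by gcongr
  have h3 : L' - L ≤ ((1 / x) / l1) / l2 := by
    calc L' - L ≤ (l2' - l2) / l2 := log_diff_le' hl2pos hl2le
      _ ≤ ((1 / x) / l1) / l2 := by gcongr
  set h : ℝ := ((1 / x) / l1) / l2 with hhdef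
  have hhx : h ≤ 1 / x := by
    rw [hhdef]
    have h1x : (0:ℝ) < 1 / x := by positivity
    calc ((1 / x) / l1) / l2 ≤ (1 / x) / l1 := by
          apply div_le_self (by positivity) (by linarith)
      _ ≤ 1 / x := div_le_self (le_of_lt h1x) (by linarith)
  -- exponent manipulation
  have hLrw : ((L) ^ (-σ) : ℝ) ^ (-q) = L ^ (σ * q) := by
    rw [← Real.rpow_mul hLpos.le]
    ring_nf
  -- γ * L ^ (σ q) ≤ L
  have hkey : γ * L ^ (σ * q) ≤ L := by
    have hγL : γ ≤ L ^ c := by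
      have hMγ : γ ^ (1 / c) ≤ M := le_max_right _ _
      have h1 : (γ ^ (1 / c)) ^ c ≤ L ^ c :=
        Real.rpow_le_rpow (Real.rpow_nonneg hγ.le _) (hMγ.trans hLM) hc0.le
      have h2 : (γ ^ (1 / c)) ^ c = γ := by
        rw [← Real.rpow_mul hγ.le, one_div_mul_cancel hc0.ne', Real.rpow_one]
      linarith
    have hsplit : L ^ c * L ^ (σ * q) = L := by
      rw [← Real.rpow_add hLpos]
      simp [hcdef]
    have hpow : (0:ℝ) < L ^ (σ * q) := Real.rpow_pos_of_pos hLpos _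
    calc γ * L ^ (σ * q) ≤ L ^ c * L ^ (σ * q) := by
          exact mul_le_mul_of_nonneg_right hγL hpow.le
      _ = L := hsplit
  set ε : ℝ := Real.exp (-Real.exp (Real.exp (γ * L ^ (σ * q)))) with hεdef
  have hεx : 1 / x ≤ ε := by
    have e1 : Real.exp L = l2 := Real.exp_log hl2pos
    have e2 : Real.exp l2 = l1 := Real.exp_log hl1pos
    have e3 : Real.exp l1 = x := Real.exp_log hx0
    have : Real.exp (Real.exp (γ * L ^ (σ * q))) ≤ l1 := by
      calc Real.exp (Real.exp (γ * L ^ (σ * q))) ≤ Real.exp (Real.exp L) :=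
            exp_le_exp.2 (exp_le_exp.2 hkey)
        _ = l1 := by rw [e1, e2]
      
    calc 1 / x = Real.exp (-l1) := by
          rw [Real.exp_neg, e3, one_div]
      _ ≤ ε := exp_le_exp.2 (by linarith)
  have hhε : h ≤ ε := hhx.trans hεx
  -- ratio bound
  have hratio : 1 - ε ≤ L / L' := by
    have : L' - L ≤ ε := by
      calc L' - L ≤ h := h3
        _ ≤ ε := hhε
    have hL'1 : (1:ℝ) ≤ L' := by linarith
    rw [le_div_iff₀ hL'pos]
    nlinarith
  have hrat1 : L / L' ≤ 1 := (div_le_one hL'pos).2 hLle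
  have hratpos : 0 < L / L' := div_pos hLpos hL'pos
  have hpowrat : L / L' ≤ (L / L') ^ σ := by
    calc L / L' = (L / L') ^ (1:ℝ) := (Real.rpow_one _).symm
      _ ≤ (L / L') ^ σ := Real.rpow_le_rpow_of_exponent_ge hratpos hrat1 hσ1.le
  have hεpos : 0 < ε := Real.exp_pos _
  have hfinal : L ^ (-σ) * (1 - ε) ≤ L' ^ (-σ) := by
    have hid : L ^ (-σ) * (L / L') ^ σ = L' ^ (-σ) := by
      rw [Real.div_rpow hLpos.le hL'pos.le, Real.rpow_neg hLpos.le,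
        Real.rpow_neg hL'pos.le]
      field_simp
    calc L ^ (-σ) * (1 - ε) ≤ L ^ (-σ) * (L / L') ^ σ := by
          apply mul_le_mul_of_nonneg_left _ (Real.rpow_nonneg hLpos.le _)
          linarith [hpowrat]
      _ = L' ^ (-σ) := hid
  rw [ge_iff_le, hLrw]
  exact hfinal
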